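/- Proposition 1 (validity of the LBBD cut in the uncongested, no-ramping setting): suppose 0 ≤ Pmin_g ≤ Pmax_g and 0 ≤ c_g ≤ C for all g ∈ G, and ∑_{g∈G} Pmin_g < d_t(ω) for every t ∈ T and ω ∈ Ω. Then for every commitment y : G × T → {0,1}, the worst-case consumer exposure satisfies the LBBD cut V̂(y) ≥ ∑_{t∈T} V̂*_t · (1 − ∑_{g∈I_{0t}} y_{gt}); moreover, at y = y* the right-hand side equals the exact worst-case exposure V̂(y*). -/

import Mathlib

open Finset

/-- Indicator of a boolean commitment value as a real number. -/
def ind (b : Bool) : ℝ := if b then 1 else 0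

/-- Available supply of the committed set `S` at price `p`:
generators with marginal cost `≤ p` produce at their maximum,
all others at their minimum. -/
noncomputable def supply {G : Type*} (c Pmin Pmax : G → ℝ) (S : Finset G) (p : ℝ) : ℝ :=
  (∑ g ∈ S.filter (fun g => c g ≤ p), Pmax g) +
  (∑ g ∈ S.filter (fun g => ¬ c g ≤ p), Pmin g)

/-- Uncongested market-clearing price for the committed set `S` and demand `D`,
with price cap (value of lost load) `C`. -/
noncomputable def clearingPrice {G : Type*} (c Pmin Pmax : G → ℝ) (C : ℝ)
    (S : Finset G) (D : ℝ) : ℝ :=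
  if D ≤ ∑ g ∈ S, Pmax g then sInf {p : ℝ | D ≤ supply c Pmin Pmax S p} else C

/-- The set of generators committed at hour `t` under commitment `y`. -/
def committedSet {G T : Type*} [Fintype G] (y : G → T → Bool) (t : T) : Finset G :=
  univ.filter (fun g => y g t = true)

/-- Total real-time consumer exposure under commitment `y` in scenario `ω`. -/
noncomputable def exposure {G T Ω : Type*} [Fintype G] [Fintype T]
    (c Pmin Pmax : G → ℝ) (C : ℝ) (Dbar : T → ℝ) (d : T → Ω → ℝ)
    (y : G → T → Bool) (ω : Ω) : ℝ :=
  ∑ t : T, clearingPrice c Pmin Pmax C (committedSet y t) (d t ω) * max (d t ω - Dbar t) 0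

/-- Worst-case total real-time consumer exposure under commitment `y`. -/
noncomputable def worstExposure {G T Ω : Type*} [Fintype G] [Fintype T] [Fintype Ω] [Nonempty Ω]
    (c Pmin Pmax : G → ℝ) (C : ℝ) (Dbar : T → ℝ) (d : T → Ω → ℝ)
    (y : G → T → Bool) : ℝ :=
  univ.sup' univ_nonempty (exposure c Pmin Pmax C Dbar d y)

/-!
For `p < 0` every committed generator sits at its minimum output, and the committed minima
cannot meet demand, so clearing prices are nonnegative; committing more generators only raises
supply, so the clearing price is antitone in the committed set. Hence in an hour where `y`
commits no generator that `y*` leaves off, `y` faces a price at least `λ_C(S_t(y*), d_t(ω*))`,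
while in any other hour the cut coefficient `1 - ∑_{g∈I₀ₜ} y_{gt}` is `≤ 0`. Summing over hours
and evaluating at `ω*` gives the cut; at `y = y*` every coefficient is `1`.
-/

section ClearingPrice

variable {G : Type*} {c Pmin Pmax : G → ℝ} {C D p : ℝ} {S S' : Finset G}

theorem supply_of_forall_lt (h : ∀ g ∈ S, p < c g) :
    supply c Pmin Pmax S p = ∑ g ∈ S, Pmin g := by
  rw [supply, filter_false_of_mem fun g hg => not_le.2 (h g hg),
    filter_true_of_mem fun g hg => not_le.2 (h g hg), sum_empty, zero_add]

theorem supply_of_forall_le (h : ∀ g ∈ S, c g ≤ p) :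
    supply c Pmin Pmax S p = ∑ g ∈ S, Pmax g := by
  rw [supply, filter_true_of_mem h, filter_false_of_mem fun g hg hn => hn (h g hg),
    sum_empty, add_zero]

theorem supply_mono (hPmin : ∀ g, 0 ≤ Pmin g) (hPmax : ∀ g, 0 ≤ Pmax g) (hSS : S ⊆ S') :
    supply c Pmin Pmax S p ≤ supply c Pmin Pmax S' p :=
  add_le_add
    (sum_le_sum_of_subset_of_nonneg (filter_subset_filter _ hSS) fun g _ _ => hPmax g)
    (sum_le_sum_of_subset_of_nonneg (filter_subset_filter _ hSS) fun g _ _ => hPmin g)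

theorem nonneg_of_le_supply (hc0 : ∀ g, 0 ≤ c g) (hD : ∑ g ∈ S, Pmin g < D)
    (hp : D ≤ supply c Pmin Pmax S p) : 0 ≤ p := by
  by_contra! hp0
  rw [supply_of_forall_lt fun g _ => hp0.trans_le (hc0 g)] at hp
  linarith

theorem bddBelow_setOf_le_supply (hc0 : ∀ g, 0 ≤ c g) (hD : ∑ g ∈ S, Pmin g < D) :
    BddBelow {p | D ≤ supply c Pmin Pmax S p} :=
  ⟨0, fun _ hp => nonneg_of_le_supply hc0 hD hp⟩

theorem cap_mem_setOf_le_supply (hcC : ∀ g, c g ≤ C) (hD : D ≤ ∑ g ∈ S, Pmax g) :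
    C ∈ {p | D ≤ supply c Pmin Pmax S p} := by
  rwa [Set.mem_ofPred_eq, supply_of_forall_le fun g _ => hcC g]

theorem clearingPrice_nonneg (hC : 0 ≤ C) (hc0 : ∀ g, 0 ≤ c g)
    (hD : ∑ g ∈ S, Pmin g < D) : 0 ≤ clearingPrice c Pmin Pmax C S D := by
  rw [clearingPrice]
  split_ifs
  · exact Real.sInf_nonneg fun _ hp => nonneg_of_le_supply hc0 hD hp
  · exact hC

theorem clearingPrice_le_cap (hc0 : ∀ g, 0 ≤ c g) (hcC : ∀ g, c g ≤ C)
    (hD : ∑ g ∈ S, Pmin g < D) : clearingPrice c Pmin Pmax C S D ≤ C := by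
  rw [clearingPrice]
  split_ifs with hS
  · exact csInf_le (bddBelow_setOf_le_supply hc0 hD) (cap_mem_setOf_le_supply hcC hS)
  · exact le_rfl

theorem clearingPrice_antitone (hPmin : ∀ g, 0 ≤ Pmin g) (hPmax : ∀ g, 0 ≤ Pmax g)
    (hc0 : ∀ g, 0 ≤ c g) (hcC : ∀ g, c g ≤ C) (hSS : S ⊆ S') (hD : ∑ g ∈ S', Pmin g < D) :
    clearingPrice c Pmin Pmax C S' D ≤ clearingPrice c Pmin Pmax C S D := by
  by_cases hS : D ≤ ∑ g ∈ S, Pmax g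
  · have hS' : D ≤ ∑ g ∈ S', Pmax g :=
      hS.trans (sum_le_sum_of_subset_of_nonneg hSS fun g _ _ => hPmax g)
    rw [clearingPrice, clearingPrice, if_pos hS, if_pos hS']
    exact csInf_le_csInf (bddBelow_setOf_le_supply hc0 hD)
      ⟨C, cap_mem_setOf_le_supply hcC hS⟩ fun _ hp => le_trans hp (supply_mono hPmin hPmax hSS)
  · exact (clearingPrice_le_cap hc0 hcC hD).trans_eq (if_neg hS).symm

end ClearingPrice

section Cut

variable {G T : Type*} [Fintype G]

theorem ind_nonneg (b : Bool) : 0 ≤ ind b := by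
  cases b <;> simp [ind]

theorem sum_ind_uncommitted_self (y : G → T → Bool) (t : T) :
    ∑ g ∈ univ.filter (fun g => y g t = false), ind (y g t) = 0 :=
  sum_eq_zero fun g hg => by simp [ind, (mem_filter.1 hg).2]

/-- The per-hour inequality behind the cut, for any `a` and `b` standing for the hour-`t`
exposures under `y*` and `y`. -/
theorem mul_one_sub_sum_ind_le (y ystar : G → T → Bool) (t : T) {a b : ℝ} (ha : 0 ≤ a)
    (hb : 0 ≤ b) (hab : committedSet y t ⊆ committedSet ystar t → a ≤ b) :
    a * (1 - ∑ g ∈ univ.filter (fun g => ystar g t = false), ind (y g t)) ≤ b := by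
  set s := ∑ g ∈ univ.filter (fun g => ystar g t = false), ind (y g t)
  have hs : 0 ≤ s := sum_nonneg fun g _ => ind_nonneg (y g t)
  by_cases hsub : committedSet y t ⊆ committedSet ystar t
  · nlinarith [hab hsub]
  · obtain ⟨g, hy, hystar⟩ := not_subset.1 hsub
    simp only [committedSet, mem_filter, mem_univ, true_and, Bool.not_eq_true] at hy hystar
    have hone : ind (y g t) ≤ s := single_le_sum (f := fun g => ind (y g t))
      (fun g _ => ind_nonneg (y g t)) (mem_filter.2 ⟨mem_univ g, hystar⟩)
    rw [hy, ind, if_pos rfl] at hone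
    nlinarith

end Cut

theorem worstExposure_eq_of_forall_le {G T Ω : Type*} [Fintype G] [Fintype T] [Fintype Ω]
    [Nonempty Ω] {c Pmin Pmax : G → ℝ} {C : ℝ} {Dbar : T → ℝ} {d : T → Ω → ℝ}
    {y : G → T → Bool} {ω₀ : Ω}
    (h : ∀ ω, exposure c Pmin Pmax C Dbar d y ω ≤ exposure c Pmin Pmax C Dbar d y ω₀) :
    worstExposure c Pmin Pmax C Dbar d y = exposure c Pmin Pmax C Dbar d y ω₀ :=
  le_antisymm (sup'_le _ _ fun ω _ => h ω) (le_sup' _ (mem_univ ω₀))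

theorem lbbd_cut_valid_general {G T Ω : Type*} [Fintype G] [Fintype T] [Fintype Ω] [Nonempty Ω]
    (c Pmin Pmax : G → ℝ) (C : ℝ) (hC : 0 < C)
    (hPmin : ∀ g, 0 ≤ Pmin g) (hPminmax : ∀ g, Pmin g ≤ Pmax g)
    (hc0 : ∀ g, 0 ≤ c g) (hcC : ∀ g, c g ≤ C)
    (Dbar : T → ℝ) (d : T → Ω → ℝ)
    (hmin : ∀ t ω, ∑ g : G, Pmin g < d t ω)
    (ystar : G → T → Bool) (ωstar : Ω)
    (hωstar : ∀ ω : Ω,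
      exposure c Pmin Pmax C Dbar d ystar ω ≤ exposure c Pmin Pmax C Dbar d ystar ωstar) :
    (∀ y : G → T → Bool,
      worstExposure c Pmin Pmax C Dbar d y ≥
        ∑ t : T,
          (clearingPrice c Pmin Pmax C (committedSet ystar t) (d t ωstar) *
              max (d t ωstar - Dbar t) 0) *
            (1 - ∑ g ∈ univ.filter (fun g => ystar g t = false), ind (y g t))) ∧
    (∑ t : T,
        (clearingPrice c Pmin Pmax C (committedSet ystar t) (d t ωstar) *
            max (d t ωstar - Dbar t) 0) *
          (1 - ∑ g ∈ univ.filter (fun g => ystar g t = false), ind (ystar g t))) =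
      worstExposure c Pmin Pmax C Dbar d ystar := by
  have hPmax : ∀ g, 0 ≤ Pmax g := fun g => (hPmin g).trans (hPminmax g)
  have hminS : ∀ (S : Finset G) t ω, ∑ g ∈ S, Pmin g < d t ω := fun S t ω =>
    (sum_le_sum_of_subset_of_nonneg (subset_univ S) fun g _ _ => hPmin g).trans_lt (hmin t ω)
  have hexposure : ∀ (S : Finset G) t,
      0 ≤ clearingPrice c Pmin Pmax C S (d t ωstar) * max (d t ωstar - Dbar t) 0 := fun S t =>
    mul_nonneg (clearingPrice_nonneg hC.le hc0 (hminS S t ωstar)) (le_max_right _ _)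
  refine ⟨fun y => ?_, ?_⟩
  · calc _ ≤ exposure c Pmin Pmax C Dbar d y ωstar :=
          sum_le_sum fun t _ => mul_one_sub_sum_ind_le y ystar t (hexposure _ t) (hexposure _ t)
            fun hsub => mul_le_mul_of_nonneg_right
              (clearingPrice_antitone hPmin hPmax hc0 hcC hsub (hminS _ t ωstar))
              (le_max_right _ _)
      _ ≤ worstExposure c Pmin Pmax C Dbar d y := le_sup' _ (mem_univ ωstar)
  · simp only [worstExposure_eq_of_forall_le hωstar, exposure, sum_ind_uncommitted_self, sub_zero,
      mul_one]

/-- Proposition 1 (validity of the LBBD cut in the uncongested, no-ramping setting):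
for every commitment `y`, `V̂(y) ≥ ∑_t V̂*_t · (1 − ∑_{g∈I₀ₜ} y_{gt})`, where
`V̂*_t = λ_C(S_t(y*), d_t(ω*)) · (d_t(ω*) − D̄_t)⁺` and `ω*` is a worst-case scenario
for `y*`; moreover at `y = y*` the right-hand side equals the exact worst-case
exposure `V̂(y*)`. -/
theorem lbbd_cut_valid {G T Ω : Type*} [Fintype G] [Fintype T] [Fintype Ω] [Nonempty Ω]
    (c Pmin Pmax : G → ℝ) (C : ℝ) (hC : 0 < C)
    (hPmin : ∀ g, 0 ≤ Pmin g) (hPminmax : ∀ g, Pmin g ≤ Pmax g)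
    (hc0 : ∀ g, 0 ≤ c g) (hcC : ∀ g, c g ≤ C)
    (Dbar : T → ℝ) (d : T → Ω → ℝ) (hd : ∀ t ω, 0 < d t ω)
    (hmin : ∀ t ω, ∑ g : G, Pmin g < d t ω)
    (ystar : G → T → Bool) (ωstar : Ω)
    (hωstar : ∀ ω : Ω,
      exposure c Pmin Pmax C Dbar d ystar ω ≤ exposure c Pmin Pmax C Dbar d ystar ωstar) :
    (∀ y : G → T → Bool,
      worstExposure c Pmin Pmax C Dbar d y ≥
        ∑ t : T,
          (clearingPrice c Pmin Pmax C (committedSet ystar t) (d t ωstar) *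
              max (d t ωstar - Dbar t) 0) *
            (1 - ∑ g ∈ univ.filter (fun g => ystar g t = false), ind (y g t))) ∧
    (∑ t : T,
        (clearingPrice c Pmin Pmax C (committedSet ystar t) (d t ωstar) *
            max (d t ωstar - Dbar t) 0) *
          (1 - ∑ g ∈ univ.filter (fun g => ystar g t = false), ind (ystar g t))) =
      worstExposure c Pmin Pmax C Dbar d ystar :=
  lbbd_cut_valid_general c Pmin Pmax C hC hPmin hPminmax hc0 hcC Dbar d hmin ystar ωstar hωstar
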